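/- For every non-decreasing sequence x : ℕ → ℕ (indexed from 1) and every n ≥ 1, the following identity holds in ℤ: Σ_{k=0}^{n} (−1)^{n − k + 1} · C(n, k) · PF(x; k) · x(k+1)^{n − k} = 0. -/

import Mathlib

def IsPF (x : ℕ → ℕ) {n : ℕ} (f : Fin n → ℕ) : Prop :=
  (∀ i, 1 ≤ f i) ∧
  ∀ k, 1 ≤ k → k ≤ n → k ≤ (Finset.univ.filter (fun i => f i ≤ x k)).card

noncomputable def PF (x : ℕ → ℕ) (n : ℕ) : ℕ :=
  Nat.card {f : Fin n → ℕ // IsPF x f}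

/-!
Every `f : Fin n → [1, N]` has a unique *parking core*: a set `S` of indices on which `f`
restricts to an `x`-parking function of length `#S`, while every value off `S` exceeds
`x (#S + 1)`. Counting by cores gives, for `N ≥ x (n + 1)`,
`N ^ n = ∑ k, C(n, k) PF(x; k) (N - x (k + 1)) ^ (n - k)`.
Both sides are polynomials in `N` that agree for all large `N`, so the identity holds at every
integer, and at `N = 0` it is the alternating sum.
-/

open Finset

theorem card_filter_subtype_le {ι : Type*} [Fintype ι] (S : Finset ι) (p : ι → Prop)
    [DecidablePred p] : #{i : S | p i} ≤ #{i | p i} :=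
  card_le_card_of_injOn Subtype.val (fun i hi => by simpa using hi) Subtype.val_injective.injOn

theorem card_filter_subtype_eq {ι : Type*} [Fintype ι] (S : Finset ι) (p : ι → Prop)
    [DecidablePred p] (hp : ∀ i, p i → i ∈ S) : #{i : S | p i} = #{i | p i} := by
  refine (card_filter_subtype_le S p).antisymm ?_
  exact card_le_card_of_surjOn Subtype.val fun i hi => by
    simp only [coe_filter, mem_univ, true_and, Set.mem_ofPred_eq] at hi
    exact ⟨⟨i, hp i hi⟩, by simpa using hi, rfl⟩

theorem Nat.card_eq_sum_card_of_existsUnique {α β : Type*} [Fintype β] {P : α → Prop}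
    [Finite {a // P a}] {Q : β → α → Prop} (h : ∀ a, P a → ∃! b, Q b a) :
    Nat.card {a // P a} = ∑ b, Nat.card {a // P a ∧ Q b a} := by
  choose g hg hg_unique using h
  calc Nat.card {a // P a}
      = Nat.card (Σ b, {a : {a // P a} // g a.1 a.2 = b}) :=
        Nat.card_congr (Equiv.sigmaFiberEquiv _).symm
    _ = ∑ b, Nat.card {a : {a // P a} // g a.1 a.2 = b} := Nat.card_sigma
    _ = ∑ b, Nat.card {a // P a ∧ Q b a} := by
        refine sum_congr rfl fun b _ => Nat.card_congr ?_
        refine (Equiv.subtypeEquivRight fun a => ?_).trans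
          (Equiv.subtypeSubtypeEquivSubtypeInter P (Q b))
        exact ⟨fun hb => hb ▸ hg a.1 a.2, fun hb => (hg_unique a.1 a.2 b hb).symm⟩

theorem Nat.card_pi_mem_Ioc (κ : Type*) [Fintype κ] (a N : ℕ) :
    Nat.card {h : κ → ℕ // ∀ i, h i ∈ Ioc a N} = (N - a) ^ Fintype.card κ := by
  rw [Nat.card_congr (Equiv.subtypePiEquivPi (p := fun _ b => b ∈ Ioc a N))]
  simp only [Nat.card_pi, Nat.card_eq_fintype_card, Fintype.card_coe, Nat.card_Ioc, prod_const,
    Finset.card_univ]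

section Parking

variable {ι κ : Type*} [Fintype ι] [Fintype κ]

def IsParking (x : ℕ → ℕ) (f : ι → ℕ) : Prop :=
  (∀ i, 1 ≤ f i) ∧ ∀ k, 1 ≤ k → k ≤ Fintype.card ι → k ≤ #{i | f i ≤ x k}

variable {x : ℕ → ℕ}

theorem isPF_iff_isParking {n : ℕ} (f : Fin n → ℕ) : IsPF x f ↔ IsParking x f := by
  rw [IsParking, Fintype.card_fin]
  rfl

theorem isParking_comp_equiv (e : κ ≃ ι) {f : ι → ℕ} :
    IsParking x (f ∘ e) ↔ IsParking x f := by
  have hcard : ∀ k, #{j | f (e j) ≤ x k} = #{i | f i ≤ x k} :=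
    fun k => card_equiv e (by simp)
  simp only [IsParking, Function.comp_apply, hcard, Fintype.card_congr e, e.forall_congr_left,
    Equiv.apply_symm_apply]

variable (x) in
theorem card_isParking : Nat.card {f : ι → ℕ // IsParking x f} = PF x (Fintype.card ι) :=
  Nat.card_congr <| (Equiv.arrowCongr (Fintype.equivFin ι) (Equiv.refl ℕ)).subtypeEquiv
    fun _ => (isParking_comp_equiv _).symm.trans (isPF_iff_isParking _).symm

theorem IsParking.le_card {f : ι → ℕ} (hf : IsParking x f) (i : ι) :
    f i ≤ x (Fintype.card ι) := by
  have h := hf.2 _ (Fintype.card_pos_iff.2 ⟨i⟩) le_rfl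
  exact card_filter_eq_iff.1 (le_antisymm (card_filter_le _ _) h) i (mem_univ i)

end Parking

theorem IsParking.le_succ_card_of_mem {ι : Type*} {x : ℕ → ℕ} (hx : MonotoneOn x (Set.Ici 1))
    {S : Finset ι} {f : ι → ℕ} (h : IsParking x (fun i : S => f i)) {i : ι} (hi : i ∈ S) :
    f i ≤ x (#S + 1) := by
  have hS : 1 ≤ #S := card_pos.2 ⟨i, hi⟩
  calc f i ≤ x #S := by simpa using h.le_card ⟨i, hi⟩
    _ ≤ x (#S + 1) := hx hS (by simp) (by omega)

section Core

variable {ι : Type*} [Fintype ι] {x : ℕ → ℕ}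

variable (x) in
def IsParkingCore (S : Finset ι) (f : ι → ℕ) : Prop :=
  IsParking x (fun i : S => f i) ∧ ∀ i ∉ S, x (#S + 1) < f i

theorem IsParkingCore.filter_eq (hx : MonotoneOn x (Set.Ici 1)) {S : Finset ι} {f : ι → ℕ}
    (h : IsParkingCore x S f) : ({i | f i ≤ x (#S + 1)} : Finset ι) = S := by
  ext i
  simp only [mem_filter, mem_univ, true_and]
  exact ⟨fun hi => by_contra fun hiS => (h.2 i hiS).not_ge hi, h.1.le_succ_card_of_mem hx⟩

theorem IsParkingCore.unique (hx : MonotoneOn x (Set.Ici 1)) {S T : Finset ι} {f : ι → ℕ}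
    (hS : IsParkingCore x S f) (hT : IsParkingCore x T f) : S = T := by
  -- A core `S` larger than `T` has `#T + 1` values `≤ x (#T + 1)`, but all such values lie in `T`.
  have card_le : ∀ {S T : Finset ι}, IsParkingCore x S f → IsParkingCore x T f → #S ≤ #T := by
    intro S T hS hT
    by_contra! hlt
    have h1 : #T + 1 ≤ #{i : S | f i ≤ x (#T + 1)} :=
      hS.1.2 _ le_add_self (by simpa using hlt)
    have h2 : #{i : S | f i ≤ x (#T + 1)} ≤ #T :=
      (card_filter_subtype_le S (fun i => f i ≤ x (#T + 1))).trans
        (congrArg card (hT.filter_eq hx)).le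
    omega
  rw [← hS.filter_eq hx, ← hT.filter_eq hx, (card_le hS hT).antisymm (card_le hT hS)]

theorem exists_isParkingCore (hx : MonotoneOn x (Set.Ici 1)) {f : ι → ℕ} (hf : ∀ i, 1 ≤ f i) :
    ∃ S, IsParkingCore x S f := by
  have hex : ∃ j, #{i | f i ≤ x (j + 1)} ≤ j := ⟨Fintype.card ι, card_filter_le _ _⟩
  set k := Nat.find hex
  have hmin : ∀ j < k, j < #{i | f i ≤ x (j + 1)} := fun j hj => not_le.1 (Nat.find_min hex hj)
  have hk : #{i | f i ≤ x (k + 1)} = k := by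
    refine (Nat.find_spec hex).antisymm ?_
    rcases Nat.eq_zero_or_pos k with h0 | hpos
    · omega
    calc k ≤ #{i | f i ≤ x k} := by
          have := hmin (k - 1) (by omega)
          rw [Nat.sub_add_cancel hpos] at this
          omega
      _ ≤ #{i | f i ≤ x (k + 1)} := card_le_card fun i => by
          simp only [mem_filter, mem_univ, true_and]
          exact fun h => h.trans (hx hpos (by simp) (by omega))
  refine ⟨({i | f i ≤ x (k + 1)} : Finset ι), ⟨fun i => hf i, fun m hm1 hm => ?_⟩, fun i hi => ?_⟩
  · rw [Fintype.card_coe, hk] at hm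
    rw [card_filter_subtype_eq _ (fun i => f i ≤ x m)
      fun i hi => by simpa using hi.trans (hx hm1 (by simp) (by omega))]
    have := hmin (m - 1) (by omega)
    rw [Nat.sub_add_cancel hm1] at this
    omega
  · simpa [hk] using hi

theorem card_isParkingCore [DecidableEq ι] (hx : MonotoneOn x (Set.Ici 1)) (S : Finset ι)
    {N : ℕ} (hN : x (#S + 1) ≤ N) :
    Nat.card {f : ι → ℕ // (∀ i, f i ∈ Ioc 0 N) ∧ IsParkingCore x S f} =
      PF x #S * (N - x (#S + 1)) ^ (Fintype.card ι - #S) := by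
  have hsplit : ∀ f : ι → ℕ, ((∀ i, f i ∈ Ioc 0 N) ∧ IsParkingCore x S f) ↔
      IsParking x (fun i : S => f i) ∧ ∀ i : {i // i ∉ S}, f i ∈ Ioc (x (#S + 1)) N := by
    refine fun f => ⟨fun ⟨hbox, hpark, hout⟩ => ⟨hpark, fun i => ?_⟩,
      fun ⟨hpark, hout⟩ => ⟨fun i => ?_, hpark, fun i hi => (mem_Ioc.1 (hout ⟨i, hi⟩)).1⟩⟩
    · exact mem_Ioc.2 ⟨hout i i.2, (mem_Ioc.1 (hbox i)).2⟩
    · by_cases hi : i ∈ S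
      · exact mem_Ioc.2 ⟨hpark.1 ⟨i, hi⟩, (hpark.le_succ_card_of_mem hx hi).trans hN⟩
      · have := mem_Ioc.1 (hout ⟨i, hi⟩)
        exact mem_Ioc.2 ⟨(Nat.zero_le _).trans_lt this.1, this.2⟩
  calc _ = Nat.card ({g : S → ℕ // IsParking x g} ×
        {h : {i // i ∉ S} → ℕ // ∀ i, h i ∈ Ioc (x (#S + 1)) N}) :=
        Nat.card_congr (((Equiv.piEquivPiSubtypeProd (· ∈ S) fun _ => ℕ).subtypeEquiv
          hsplit).trans Equiv.subtypeProdEquivProd)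
    _ = _ := by
        rw [Nat.card_prod, card_isParking, Fintype.card_coe, Nat.card_pi_mem_Ioc,
          Fintype.card_subtype_compl, Fintype.card_coe]

theorem pow_card_eq_sum_pf (hx : MonotoneOn x (Set.Ici 1)) {N : ℕ}
    (hN : x (Fintype.card ι + 1) ≤ N) :
    N ^ Fintype.card ι = ∑ k ∈ range (Fintype.card ι + 1),
      (Fintype.card ι).choose k * (PF x k * (N - x (k + 1)) ^ (Fintype.card ι - k)) := by
  classical
  have : Finite {f : ι → ℕ // ∀ i, f i ∈ Ioc 0 N} :=
    Finite.of_equiv _ (Equiv.subtypePiEquivPi (p := fun _ b => b ∈ Ioc 0 N)).symm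
  calc N ^ Fintype.card ι = Nat.card {f : ι → ℕ // ∀ i, f i ∈ Ioc 0 N} :=
        (Nat.card_pi_mem_Ioc ι 0 N).symm
    _ = ∑ S : Finset ι, Nat.card {f : ι → ℕ // (∀ i, f i ∈ Ioc 0 N) ∧ IsParkingCore x S f} :=
        Nat.card_eq_sum_card_of_existsUnique fun f hf =>
          (exists_isParkingCore hx fun i => (mem_Ioc.1 (hf i)).1).elim fun S hS =>
            ⟨S, hS, fun _ hT => hT.unique hx hS⟩
    _ = ∑ S : Finset ι, PF x #S * (N - x (#S + 1)) ^ (Fintype.card ι - #S) :=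
        sum_congr rfl fun S _ => card_isParkingCore hx S
          ((hx (by simp) (by simp) (by simpa using card_le_univ S)).trans hN)
    _ = _ := by
        rw [← powerset_univ, sum_powerset_apply_card
          (fun k => PF x k * (N - x (k + 1)) ^ (Fintype.card ι - k)), card_univ]
        rfl

end Core

open Polynomial in
theorem pow_eq_sum_pf {x : ℕ → ℕ} (hx : MonotoneOn x (Set.Ici 1)) (n : ℕ) (z : ℤ) :
    z ^ n = ∑ k ∈ range (n + 1), (n.choose k : ℤ) * PF x k * (z - x (k + 1)) ^ (n - k) := by
  let q : ℤ[X] :=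
    ∑ k ∈ range (n + 1), C ((n.choose k : ℤ) * PF x k) * (X - C (x (k + 1) : ℤ)) ^ (n - k)
  have hq : ∀ z : ℤ, q.eval z =
      ∑ k ∈ range (n + 1), (n.choose k : ℤ) * PF x k * (z - x (k + 1)) ^ (n - k) := by
    intro z
    simp [q, eval_finsetSum]
  suffices X ^ n = q by simpa [hq] using congrArg (eval z) this
  refine eq_of_infinite_eval_eq _ _ ((Set.Ici_infinite (x (n + 1) : ℤ)).mono fun z hz => ?_)
  lift z to ℕ using (Nat.cast_nonneg _).trans hz
  have hN : x (n + 1) ≤ z := by exact_mod_cast Set.mem_Ici.1 hz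
  have hcount := pow_card_eq_sum_pf (ι := Fin n) hx (by simpa using hN)
  simp only [Fintype.card_fin] at hcount
  simp only [Set.mem_ofPred_eq, eval_pow, eval_X, hq]
  rw [← Nat.cast_pow, hcount, Nat.cast_sum]
  refine sum_congr rfl fun k hk => ?_
  have : x (k + 1) ≤ z := (hx (by simp) (by simp) (by simpa [Nat.lt_succ_iff] using hk)).trans hN
  push_cast [this]
  ring

theorem pf_alternating_sum_eq_zero (x : ℕ → ℕ)
    (hx : ∀ m, 1 ≤ m → x m ≤ x (m + 1)) (n : ℕ) (hn : 1 ≤ n) :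
    ∑ k ∈ Finset.range (n + 1),
      (-1 : ℤ) ^ (n - k + 1) * (n.choose k : ℤ) * (PF x k : ℤ) *
        (x (k + 1) : ℤ) ^ (n - k) = 0 := by
  have h := pow_eq_sum_pf (monotoneOn_nat_Ici_of_le_succ hx) n 0
  rw [zero_pow (by omega)] at h
  calc _ = -∑ k ∈ range (n + 1), (n.choose k : ℤ) * PF x k * (0 - x (k + 1)) ^ (n - k) := by
        rw [← sum_neg_distrib]
        refine sum_congr rfl fun k _ => ?_
        rw [zero_sub, neg_pow, pow_succ]
        ring
    _ = 0 := by rw [← h, neg_zero]
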